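/- arXiv:1403.1935 — 4 statements merged into one kernel-verified Lean document; each statement's English description precedes it below -/
import Mathlib

section
/- Let (X,⪯,G) be a G-complete partially ordered G-metric space and let T : X → X be a map that is non-decreasing with respect to ⪯, satisfies x₀ ⪯ T x₀ for some x₀ ∈ X, is either G-continuous or defined on a regular non-decreasing space, and satisfies: there exist ψ ∈ Ψ and φ ∈ Φ such that for all x, y, z ∈ X with x ⪯ y ⪯ z, ψ(G(Tx,Ty,Tz)) ≤ ψ(M(x,y,z)) − φ(M(x,y,z)). Suppose in addition that for any two fixed points x, y of T there exists z ∈ X such that x ⪯ z, y ⪯ z, and the sequence (Tᵐ z)_{m∈ℕ} G-converges in X. Then T has a unique fixed point. -/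
open Filter Topology Set

/-- A G-metric on a set `X`, valued in `ℝ` (with values in `[0,∞)`). -/
structure IsGMetric {X : Type*} (G : X → X → X → ℝ) : Prop where
  nonneg : ∀ x y z, 0 ≤ G x y z
  /-- (G1) -/
  eq_zero_of_eq : ∀ x, G x x x = 0
  /-- (G2) -/
  pos_of_ne : ∀ x y, x ≠ y → 0 < G x x y
  /-- (G3) -/
  le_of_ne : ∀ x y z, y ≠ z → G x x y ≤ G x y z
  /-- (G4): invariance under permutations (generated by these two transpositions) -/
  swap_left : ∀ x y z, G x y z = G y x z
  swap_right : ∀ x y z, G x y z = G x z y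
  /-- (G5) rectangle inequality -/
  rect : ∀ x y z a, G x y z ≤ G x a a + G a y z

/-- A sequence `s` G-converges to `x` iff `G x (s n) (s n) → 0`. -/
def GConvergesTo {X : Type*} (G : X → X → X → ℝ) (s : ℕ → X) (x : X) : Prop :=
  Tendsto (fun n => G x (s n) (s n)) atTop (𝓝 0)

/-- A sequence is G-Cauchy. -/
def GCauchy {X : Type*} (G : X → X → X → ℝ) (s : ℕ → X) : Prop :=
  ∀ ε > (0 : ℝ), ∃ N : ℕ, ∀ n ≥ N, ∀ m ≥ N, ∀ l ≥ N, G (s n) (s m) (s l) < ε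

/-- `(X, G)` is G-complete. -/
def GComplete {X : Type*} (G : X → X → X → ℝ) : Prop :=
  ∀ s : ℕ → X, GCauchy G s → ∃ x, GConvergesTo G s x

/-- `T` is G-continuous. -/
def GContinuousMap {X : Type*} (G : X → X → X → ℝ) (T : X → X) : Prop :=
  ∀ (s : ℕ → X) (x : X), GConvergesTo G s x → GConvergesTo G (fun n => T (s n)) (T x)

/-- `(X, ⪯, G)` is regular non-decreasing. -/
def RegularNondecreasing {X : Type*} [PartialOrder X] (G : X → X → X → ℝ) : Prop :=
  ∀ (s : ℕ → X) (x : X), Monotone s → GConvergesTo G s x → ∀ n, s n ≤ x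

/-- Membership in the class `Ψ`: continuous, non-decreasing, nonnegative on `[0,∞)`
and vanishing exactly at `0`. -/
def MemPsi (ψ : ℝ → ℝ) : Prop :=
  ContinuousOn ψ (Ici 0) ∧ MonotoneOn ψ (Ici 0) ∧
    (∀ t ≥ (0 : ℝ), 0 ≤ ψ t) ∧ (∀ t ≥ (0 : ℝ), (ψ t = 0 ↔ t = 0))

/-- Membership in the class `Φ`: lower semicontinuous, nonnegative on `[0,∞)`
and vanishing exactly at `0`. -/
def MemPhi (φ : ℝ → ℝ) : Prop :=
  LowerSemicontinuousOn φ (Ici 0) ∧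
    (∀ t ≥ (0 : ℝ), 0 ≤ φ t) ∧ (∀ t ≥ (0 : ℝ), (φ t = 0 ↔ t = 0))

/-- The quantity `M(x,y,z)` associated with `G` and `T`. -/
noncomputable def Mfun {X : Type*} (G : X → X → X → ℝ) (T : X → X) (x y z : X) : ℝ :=
  max (G x (T x) y) (max (G x (T x) z) (max (G x y z) (max (G y (T y) (T y))
    (max (G z (T z) (T z)) ((G x (T y) (T z) + G (T x) y z) / 2)))))

/-- The quantity `N(x,y)` associated with `G` and `T`. -/
noncomputable def Nfun {X : Type*} (G : X → X → X → ℝ) (T : X → X) (x y : X) : ℝ :=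
  max (G x (T x) y) (max (G (T x) (T (T x)) (T (T x)))
    (max ((G x (T x) (T x) + G y (T y) (T y)) / 2)
      ((G x (T (T x)) (T y) + G (T x) (T x) y) / 2)))


section Aux

variable {X : Type*} {G : X → X → X → ℝ}

lemma IsGMetric.perm13 (hG : IsGMetric G) (x y z : X) : G x y z = G z y x := by
  rw [hG.swap_left, hG.swap_right, hG.swap_left]

lemma IsGMetric.half (hG : IsGMetric G) (x y : X) : G x x y ≤ 2 * G x y y := by
  have h := hG.rect x x y y
  rw [hG.swap_left y x y] at h
  linarith

lemma IsGMetric.half' (hG : IsGMetric G) (x y : X) : G x y y ≤ 2 * G x x y := by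
  have h := hG.half y x
  rw [hG.perm13 y y x, hG.perm13 y x x] at h
  exact h

lemma IsGMetric.eq_of_zero (hG : IsGMetric G) {x y : X} (h : G x x y = 0) : x = y := by
  by_contra hne
  exact absurd h (ne_of_gt (hG.pos_of_ne x y hne))

lemma glim_unique (hG : IsGMetric G) {s : ℕ → X} {a b : X}
    (ha : GConvergesTo G s a) (hb : GConvergesTo G s b) : a = b := by
  have key : ∀ n, G a b b ≤ G a (s n) (s n) + 2 * G b (s n) (s n) := by
    intro n
    have h1 := hG.rect a b b (s n)
    have h2 := hG.half' (s n) b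
    rw [hG.perm13 (s n) (s n) b] at h2
    linarith
  have hlim : Tendsto (fun n => G a (s n) (s n) + 2 * G b (s n) (s n)) atTop (𝓝 0) := by
    simpa using ha.add (hb.const_mul 2)
  have h0 : G a b b ≤ 0 :=
    le_of_tendsto_of_tendsto' tendsto_const_nhds hlim key
  have : G b b a = 0 := by
    rw [hG.perm13 b b a]
    exact le_antisymm h0 (hG.nonneg a b b)
  exact (hG.eq_of_zero this).symm

lemma keyContra {ψ φ : ℝ → ℝ} (hψ : MemPsi ψ) (hφ : MemPhi φ)
    {a M : ℕ → ℝ} (ha0 : ∀ n, 0 ≤ a n) (hM0 : ∀ n, 0 ≤ M n)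
    {c : ℝ} (hc : 0 < c) (hac : Tendsto a atTop (𝓝 c)) (hMc : Tendsto M atTop (𝓝 c))
    (hineq : ∀ n, ψ (a n) ≤ ψ (M n) - φ (M n)) : False := by
  obtain ⟨hψc, hψmono, hψ0, hψiff⟩ := hψ
  obtain ⟨hφl, hφ0, hφiff⟩ := hφ
  have hφcpos : 0 < φ c :=
    lt_of_le_of_ne (hφ0 c hc.le) fun h => hc.ne' ((hφiff c hc.le).mp h.symm)
  have haw : Tendsto a atTop (𝓝[Ici (0:ℝ)] c) :=
    tendsto_nhdsWithin_iff.mpr ⟨hac, .of_forall ha0⟩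
  have hMw : Tendsto M atTop (𝓝[Ici (0:ℝ)] c) :=
    tendsto_nhdsWithin_iff.mpr ⟨hMc, .of_forall hM0⟩
  have hψa : Tendsto (fun n => ψ (a n)) atTop (𝓝 (ψ c)) :=
    (hψc c (mem_Ici.mpr hc.le)).tendsto.comp haw
  have hψM : Tendsto (fun n => ψ (M n)) atTop (𝓝 (ψ c)) :=
    (hψc c (mem_Ici.mpr hc.le)).tendsto.comp hMw
  have hev : ∀ᶠ n in atTop, φ c / 2 < φ (M n) :=
    hMw.eventually (hφl c (mem_Ici.mpr hc.le) (φ c / 2) (by linarith))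
  have hle : ψ c ≤ ψ c - φ c / 2 := by
    refine le_of_tendsto_of_tendsto hψa (hψM.sub tendsto_const_nhds) ?_
    filter_upwards [hev] with n hn
    have := hineq n
    linarith
  linarith

lemma Mfun_nonneg (hG : IsGMetric G) (T : X → X) (x y z : X) : 0 ≤ Mfun G T x y z :=
  le_trans (hG.nonneg x (T x) y) (le_max_left _ _)

end Aux

theorem stmt9 {X : Type*} [Nonempty X] [PartialOrder X] (G : X → X → X → ℝ)
    (hG : IsGMetric G) (hcomp : GComplete G) (T : X → X) (hTmono : Monotone T)
    (x₀ : X) (hx₀ : x₀ ≤ T x₀)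
    (hcases : GContinuousMap G T ∨ RegularNondecreasing G)
    (ψ φ : ℝ → ℝ) (hψ : MemPsi ψ) (hφ : MemPhi φ)
    (hcontr : ∀ x y z : X, x ≤ y → y ≤ z →
      ψ (G (T x) (T y) (T z)) ≤ ψ (Mfun G T x y z) - φ (Mfun G T x y z))
    (hdom : ∀ x y : X, T x = x → T y = y →
      ∃ z : X, x ≤ z ∧ y ≤ z ∧ ∃ w : X, GConvergesTo G (fun m => T^[m] z) w) :
    ∃! x : X, T x = x := by
  classical
  -- the Picard orbit
  obtain ⟨s, hs0, hs⟩ : ∃ s : ℕ → X, s 0 = x₀ ∧ ∀ n, s (n + 1) = T (s n) :=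
    ⟨fun n => T^[n] x₀, rfl, fun n => Function.iterate_succ_apply' T n x₀⟩
  have hstep : ∀ n, s n ≤ s (n + 1) := by
    intro n
    induction n with
    | zero => rw [hs 0, hs0]; exact hx₀
    | succ n ih => rw [hs (n + 1), hs n]; exact hTmono (by rw [← hs n]; exact ih)
  have hmono : Monotone s := monotone_nat_of_le_succ hstep
  obtain ⟨d, hd_def⟩ : ∃ d : ℕ → ℝ, ∀ n, d n = G (s n) (s (n + 1)) (s (n + 1)) :=
    ⟨_, fun n => rfl⟩
  have hd0 : ∀ n, 0 ≤ d n := by intro n; rw [hd_def]; exact hG.nonneg _ _ _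
  -- a frequently used bound : G (s (n+1)) (s n) (s n) ≤ 2 * d n
  have half2 : ∀ n, G (s (n + 1)) (s n) (s n) ≤ 2 * d n := by
    intro n
    have h := hG.half' (s (n + 1)) (s n)
    rw [hG.perm13 (s (n + 1)) (s (n + 1)) (s n)] at h
    rw [hd_def]
    exact h
  have half3 : ∀ n, G (s n) (s n) (s (n + 1)) ≤ 2 * d n := by
    intro n
    have h := hG.half (s n) (s (n + 1))
    rw [hd_def]
    exact h
  -- contraction along the orbit
  have hC : ∀ n, ψ (G (s (n + 1)) (s (n + 2)) (s (n + 2))) ≤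
      ψ (Mfun G T (s n) (s (n + 1)) (s (n + 1))) - φ (Mfun G T (s n) (s (n + 1)) (s (n + 1))) := by
    intro n
    have h := hcontr (s n) (s (n + 1)) (s (n + 1)) (hstep n) le_rfl
    rwa [← hs n, ← hs (n + 1)] at h
  -- bounds for Mfun along the orbit
  have hMub : ∀ n, Mfun G T (s n) (s (n + 1)) (s (n + 1)) ≤ max (d n) (d (n + 1)) := by
    intro n
    have h6 : G (s n) (s (n + 2)) (s (n + 2)) ≤ d n + d (n + 1) := by
      have h := hG.rect (s n) (s (n + 2)) (s (n + 2)) (s (n + 1))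
      rw [hd_def n, hd_def (n + 1)]
      linarith
    have hdn : d n ≤ max (d n) (d (n + 1)) := le_max_left _ _
    have hdn1 : d (n + 1) ≤ max (d n) (d (n + 1)) := le_max_right _ _
    simp only [Mfun, ← hs]
    refine max_le ?_ (max_le ?_ (max_le ?_ (max_le ?_ (max_le ?_ ?_))))
    · rw [← hd_def n]; exact hdn
    · rw [← hd_def n]; exact hdn
    · rw [← hd_def n]; exact hdn
    · rw [← hd_def (n + 1)]; exact hdn1
    · rw [← hd_def (n + 1)]; exact hdn1
    · have hz : G (s (n + 1)) (s (n + 1)) (s (n + 1)) = 0 := hG.eq_zero_of_eq _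
      rw [hz]
      have : d n + d (n + 1) ≤ 2 * max (d n) (d (n + 1)) := by
        rcases le_total (d n) (d (n + 1)) with h | h
        · rw [max_eq_right h]; linarith
        · rw [max_eq_left h]; linarith
      linarith
  have hMlb : ∀ n, d n ≤ Mfun G T (s n) (s (n + 1)) (s (n + 1)) := by
    intro n
    simp only [Mfun, ← hs]
    rw [hd_def n]
    exact le_trans (le_max_left _ _) (le_max_right _ _) |>.trans (le_max_right _ _)
  have hMlb1 : ∀ n, d (n + 1) ≤ Mfun G T (s n) (s (n + 1)) (s (n + 1)) := by
    intro n
    simp only [Mfun, ← hs]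
    rw [hd_def (n + 1)]
    exact le_trans (le_trans (le_max_left _ _) (le_max_right _ _))
      (le_trans (le_max_right _ _) (le_trans (le_max_right _ _) (le_max_right _ _)))
  -- d is antitone
  have hanti : ∀ n, d (n + 1) ≤ d n := by
    intro n
    by_contra hlt
    push_neg at hlt
    have hMeq : Mfun G T (s n) (s (n + 1)) (s (n + 1)) = d (n + 1) :=
      le_antisymm (le_trans (hMub n) (max_le hlt.le le_rfl)) (hMlb1 n)
    have h := hC n
    rw [hMeq, ← hd_def (n + 1)] at h
    have hφpos : 0 ≤ φ (d (n + 1)) := hφ.2.1 _ (hd0 _)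
    have hφ0 : φ (d (n + 1)) = 0 := le_antisymm (by linarith) hφpos
    have : d (n + 1) = 0 := (hφ.2.2 _ (hd0 _)).mp hφ0
    have := hd0 n
    linarith
  have hdanti : Antitone d := antitone_nat_of_succ_le hanti
  have hdle : ∀ k n, k ≤ n → d n ≤ d k := fun k n h => hdanti h
  -- d tends to 0
  have hd_lim : Tendsto d atTop (𝓝 0) := by
    have hbdd : BddBelow (Set.range d) := ⟨0, fun x ⟨n, hn⟩ => hn ▸ hd0 n⟩
    have hlim := tendsto_atTop_ciInf hdanti hbdd
    have hr0 : 0 ≤ ⨅ n, d n := le_ciInf hd0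
    rcases eq_or_lt_of_le hr0 with h | h
    · rwa [← h] at hlim
    · exfalso
      have hMeq : ∀ n, Mfun G T (s n) (s (n + 1)) (s (n + 1)) = d n := fun n =>
        le_antisymm (le_trans (hMub n) (max_le le_rfl (hanti n))) (hMlb n)
      refine keyContra hψ hφ (a := fun n => d (n + 1)) (M := d)
        (fun n => hd0 _) hd0 h (hlim.comp (tendsto_add_atTop_nat 1)) hlim ?_
      intro n
      have hc := hC n
      rw [hMeq n, ← hd_def (n + 1)] at hc
      exact hc
  -- existence of a fixed point
  have hfix : ∃ u : X, T u = u := by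
    by_cases hstat : ∃ N, T (s N) = s N
    · obtain ⟨N, hN⟩ := hstat; exact ⟨s N, hN⟩
    · push_neg at hstat
      have hne : ∀ m, s m ≠ s (m + 1) := by
        intro m hEq
        exact hstat m ((hs m).symm.trans hEq.symm)
      -- pairwise smallness
      have hP : ∀ ε > (0 : ℝ), ∃ N, ∀ n m, N ≤ n → n ≤ m → G (s n) (s m) (s m) < ε := by
        by_contra hnot
        push_neg at hnot
        obtain ⟨ε, hε, hbad⟩ := hnot
        have hsel : ∀ k : ℕ, ∃ n m : ℕ, k ≤ n ∧ n < m ∧ ε ≤ G (s n) (s m) (s m) ∧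
            G (s n) (s (m - 1)) (s (m - 1)) < ε := by
          intro k
          obtain ⟨n, m0, hkn, hnm, hgem⟩ := hbad k
          have hne0 : n < m0 := by
            rcases lt_or_eq_of_le hnm with h | h
            · exact h
            · exfalso
              rw [← h, hG.eq_zero_of_eq] at hgem
              linarith
          have hex : ∃ m, n < m ∧ ε ≤ G (s n) (s m) (s m) := ⟨m0, hne0, hgem⟩
          refine ⟨n, Nat.find hex, hkn, (Nat.find_spec hex).1, (Nat.find_spec hex).2, ?_⟩
          rcases lt_or_eq_of_le (Nat.le_sub_one_of_lt (Nat.find_spec hex).1) with h | h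
          · have hmin := Nat.find_min hex
              (show Nat.find hex - 1 < Nat.find hex from
                Nat.sub_lt (lt_of_le_of_lt (Nat.zero_le n) (Nat.find_spec hex).1) one_pos)
            push_neg at hmin
            exact lt_of_not_ge fun hcon => absurd (hmin h) (not_lt.mpr hcon)
          · rw [← h, hG.eq_zero_of_eq]
            exact hε
        choose n m hkn hnm hge hlt using hsel
        have hm1 : ∀ k, m k - 1 + 1 = m k := fun k =>
          Nat.succ_pred_eq_of_pos (lt_of_le_of_lt (Nat.zero_le _) (hnm k))
        have hnm1 : ∀ k, n k ≤ m k - 1 := fun k => Nat.le_sub_one_of_lt (hnm k)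
        obtain ⟨u, hu_def⟩ : ∃ u : ℕ → ℝ, ∀ k, u k = G (s (n k)) (s (m k)) (s (m k)) :=
          ⟨_, fun _ => rfl⟩
        obtain ⟨A, hA_def⟩ : ∃ A : ℕ → ℝ,
            ∀ k, A k = G (s (n k + 1)) (s (m k + 1)) (s (m k + 1)) := ⟨_, fun _ => rfl⟩
        obtain ⟨Mk, hM_def⟩ : ∃ Mk : ℕ → ℝ,
            ∀ k, Mk k = Mfun G T (s (n k)) (s (m k)) (s (m k)) := ⟨_, fun _ => rfl⟩
        have hdnk : ∀ k, d (n k) ≤ d k := fun k => hdle k _ (hkn k)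
        have hdmk : ∀ k, d (m k) ≤ d k := fun k =>
          hdle k _ (le_trans (hkn k) (le_of_lt (hnm k)))
        -- upper bound on u
        have hu_ub : ∀ k, u k < ε + d k := by
          intro k
          have hr := hG.rect (s (n k)) (s (m k)) (s (m k)) (s (m k - 1))
          have hd' : G (s (m k - 1)) (s (m k)) (s (m k)) = d (m k - 1) := by
            rw [hd_def, hm1]
          rw [hd'] at hr
          have hdk : d (m k - 1) ≤ d k := hdle k _ (le_trans (hkn k) (hnm1 k))
          have := hlt k
          rw [hu_def]
          linarith
        have hu_lb : ∀ k, ε ≤ u k := by intro k; rw [hu_def]; exact hge k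
        -- the contraction inequality
        have hineq : ∀ k, ψ (A k) ≤ ψ (Mk k) - φ (Mk k) := by
          intro k
          have h := hcontr (s (n k)) (s (m k)) (s (m k))
            (hmono (le_of_lt (hnm k))) le_rfl
          rw [← hs (n k), ← hs (m k)] at h
          rw [hA_def, hM_def]
          exact h
        -- auxiliary geometric bounds
        have hb1 : ∀ k, G (s (n k)) (s (m k + 1)) (s (m k + 1)) ≤ u k + d (m k) := by
          intro k
          have hr := hG.rect (s (n k)) (s (m k + 1)) (s (m k + 1)) (s (m k))
          rw [hu_def, hd_def]
          linarith
        have hb2 : ∀ k, G (s (n k + 1)) (s (m k)) (s (m k)) ≤ 2 * d (n k) + u k := by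
          intro k
          have hr := hG.rect (s (n k + 1)) (s (m k)) (s (m k)) (s (n k))
          have h2 := half2 (n k)
          rw [hu_def]
          linarith
        have hb3 : ∀ k, G (s (n k)) (s (n k)) (s (m k)) ≤ u k + 2 * d (m k) := by
          intro k
          have h1 := hG.le_of_ne (s (n k)) (s (m k)) (s (m k + 1)) (hne (m k))
          have h2 := hG.rect (s (n k)) (s (m k)) (s (m k + 1)) (s (m k))
          have h3 := half3 (m k)
          rw [hu_def]
          linarith
        have hb4 : ∀ k, G (s (n k)) (s (n k + 1)) (s (m k)) ≤
            2 * d (n k) + u k + 2 * d (m k) := by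
          intro k
          have h0 : G (s (n k)) (s (n k + 1)) (s (m k)) =
              G (s (n k + 1)) (s (n k)) (s (m k)) := hG.swap_left _ _ _
          have hr := hG.rect (s (n k + 1)) (s (n k)) (s (m k)) (s (n k))
          have h2 := half2 (n k)
          have h3 := hb3 k
          rw [h0]
          linarith
        -- bounds on A
        have hA_lb : ∀ k, u k - d (n k) - 2 * d (m k) ≤ A k := by
          intro k
          have hr1 := hG.rect (s (n k)) (s (m k)) (s (m k)) (s (n k + 1))
          have hr2 := hG.rect (s (n k + 1)) (s (m k)) (s (m k)) (s (m k + 1))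
          have h3 : G (s (m k + 1)) (s (m k)) (s (m k)) ≤ 2 * d (m k) := half2 (m k)
          have hdn : G (s (n k)) (s (n k + 1)) (s (n k + 1)) = d (n k) := (hd_def _).symm
          rw [hu_def, hA_def]
          linarith
        have hA_ub : ∀ k, A k ≤ 2 * d (n k) + u k + d (m k) := by
          intro k
          have hr := hG.rect (s (n k + 1)) (s (m k + 1)) (s (m k + 1)) (s (n k))
          have h2 := half2 (n k)
          have h1 := hb1 k
          rw [hA_def]
          linarith
        -- bounds on Mk
        have hM_lb : ∀ k, u k ≤ Mk k := by
          intro k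
          rw [hM_def, hu_def]
          simp only [Mfun]
          exact le_trans (le_max_left _ _)
            (le_trans (le_max_right _ _) (le_max_right _ _))
        have hM_ub : ∀ k, Mk k ≤ u k + 2 * d (n k) + 2 * d (m k) := by
          intro k
          have h1 := hb4 k
          have h3 := hb1 k
          have h4 := hb2 k
          have hu0 : 0 ≤ u k := by rw [hu_def]; exact hG.nonneg _ _ _
          have hdn0 := hd0 (n k)
          have hdm0 := hd0 (m k)
          rw [hM_def]
          simp only [Mfun, ← hs]
          refine max_le ?_ (max_le ?_ (max_le ?_ (max_le ?_ (max_le ?_ ?_))))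
          · linarith
          · linarith
          · rw [← hu_def]; linarith
          · rw [← hd_def]; linarith
          · rw [← hd_def]; linarith
          · linarith
        -- limits
        have hulim : Tendsto u atTop (𝓝 ε) := by
          refine tendsto_of_tendsto_of_tendsto_of_le_of_le (g := fun _ => ε)
            (h := fun k => ε + d k) tendsto_const_nhds ?_ hu_lb (fun k => (hu_ub k).le)
          simpa using hd_lim.const_add ε
        have hAlim : Tendsto A atTop (𝓝 ε) := by
          refine tendsto_of_tendsto_of_tendsto_of_le_of_le (g := fun k => ε - 3 * d k)
            (h := fun k => ε + 5 * d k) ?_ ?_ ?_ ?_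
          · simpa using (hd_lim.const_mul 3).const_sub ε
          · simpa using (hd_lim.const_mul 5).const_add ε
          · intro k
            show ε - 3 * d k ≤ A k
            have h0 := hd0 k
            have := hA_lb k
            have h1 := hu_lb k
            have h2 := hdnk k
            have h3 := hdmk k
            linarith
          · intro k
            show A k ≤ ε + 5 * d k
            have h0 := hd0 k
            have := hA_ub k
            have h1 := (hu_ub k).le
            have h2 := hdnk k
            have h3 := hdmk k
            linarith
        have hMlim : Tendsto Mk atTop (𝓝 ε) := by
          refine tendsto_of_tendsto_of_tendsto_of_le_of_le (g := fun _ => ε)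
            (h := fun k => ε + 5 * d k) tendsto_const_nhds ?_ ?_ ?_
          · simpa using (hd_lim.const_mul 5).const_add ε
          · intro k; exact le_trans (hu_lb k) (hM_lb k)
          · intro k
            show Mk k ≤ ε + 5 * d k
            have h0 := hd0 k
            have := hM_ub k
            have h1 := (hu_ub k).le
            have h2 := hdnk k
            have h3 := hdmk k
            linarith
        exact keyContra hψ hφ
          (fun k => by rw [hA_def]; exact hG.nonneg _ _ _)
          (fun k => by rw [hM_def]; exact Mfun_nonneg hG _ _ _ _)
          hε hAlim hMlim hineq
      -- the orbit is G-Cauchy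
      have hcauchy : GCauchy G s := by
        intro ε hε
        obtain ⟨N, hN⟩ := hP (ε / 4) (by linarith)
        refine ⟨N, fun a ha b hb c hc => ?_⟩
        have key : ∀ i j, N ≤ i → N ≤ j → G (s i) (s j) (s j) < ε / 2 := by
          intro i j hi hj
          rcases le_total i j with h | h
          · have := hN i j hi h; linarith
          · have h2 := hG.half' (s i) (s j)
            rw [hG.perm13 (s i) (s i) (s j)] at h2
            have := hN j i hj h
            linarith
        have h1 := key a b ha hb
        have h2 := key c b hc hb
        have hr := hG.rect (s a) (s b) (s c) (s b)
        have hperm : G (s b) (s b) (s c) = G (s c) (s b) (s b) := hG.perm13 _ _ _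
        linarith
      obtain ⟨u, hu⟩ := hcomp s hcauchy
      have hu' : Tendsto (fun n => G u (s n) (s n)) atTop (𝓝 0) := hu
      have hu1 : Tendsto (fun n => G u (s (n + 1)) (s (n + 1))) atTop (𝓝 0) :=
        hu'.comp (tendsto_add_atTop_nat 1)
      refine ⟨u, ?_⟩
      rcases hcases with hcont | hreg
      · -- continuity case
        have h1 : GConvergesTo G (fun k => s (k + 1)) (T u) := by
          simp only [hs]
          exact hcont s u hu
        have h2 : GConvergesTo G (fun k => s (k + 1)) u := hu1
        exact (glim_unique hG h2 h1).symm
      · -- regular case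
        by_contra hTu
        have hsu : ∀ n, s n ≤ u := hreg s u hmono hu
        have hcpos : 0 < G u (T u) (T u) := by
          have h := hG.pos_of_ne (T u) u hTu
          rwa [hG.perm13 (T u) (T u) u] at h
        obtain ⟨A, hA_def⟩ : ∃ A : ℕ → ℝ, ∀ n, A n = G (s (n + 1)) (T u) (T u) :=
          ⟨_, fun _ => rfl⟩
        obtain ⟨Mk, hM_def⟩ : ∃ Mk : ℕ → ℝ, ∀ n, Mk n = Mfun G T (s n) u u :=
          ⟨_, fun _ => rfl⟩
        obtain ⟨e, he_def⟩ : ∃ e : ℕ → ℝ, ∀ n, e n = G u (s n) (s n) := ⟨_, fun _ => rfl⟩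
        have he_lim : Tendsto e atTop (𝓝 0) := by
          have : (fun n => G u (s n) (s n)) = e := funext fun n => (he_def n).symm
          rwa [this] at hu'
        have he_lim1 : Tendsto (fun n => e (n + 1)) atTop (𝓝 0) :=
          he_lim.comp (tendsto_add_atTop_nat 1)
        have hineq : ∀ n, ψ (A n) ≤ ψ (Mk n) - φ (Mk n) := by
          intro n
          have h := hcontr (s n) u u (hsu n) le_rfl
          rw [← hs n] at h
          rw [hA_def, hM_def]
          exact h
        have hperm_e : ∀ n, G (s n) (s n) u = e n := by
          intro n
          rw [he_def, hG.perm13 (s n) (s n) u]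
        -- bounds on A
        have hA_lb : ∀ n, G u (T u) (T u) - e (n + 1) ≤ A n := by
          intro n
          have hr := hG.rect u (T u) (T u) (s (n + 1))
          rw [hA_def, he_def]
          linarith
        have hA_ub : ∀ n, A n ≤ 2 * e (n + 1) + G u (T u) (T u) := by
          intro n
          have hr := hG.rect (s (n + 1)) (T u) (T u) u
          have h2 := hG.half' (s (n + 1)) u
          rw [hG.perm13 (s (n + 1)) (s (n + 1)) u] at h2
          rw [hA_def, he_def]
          linarith
        -- bounds on Mk
        have hM_lb : ∀ n, G u (T u) (T u) ≤ Mk n := by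
          intro n
          rw [hM_def]
          simp only [Mfun]
          exact le_trans (le_max_left _ _) (le_trans (le_max_right _ _)
            (le_trans (le_max_right _ _) (le_max_right _ _)))
        have hM_ub : ∀ n, Mk n ≤ G u (T u) (T u) + 2 * d n + 2 * e n + 2 * e (n + 1) := by
          intro n
          have hc0 : 0 ≤ G u (T u) (T u) := hG.nonneg _ _ _
          have he0 : 0 ≤ e n := by rw [he_def]; exact hG.nonneg _ _ _
          have he10 : 0 ≤ e (n + 1) := by rw [he_def]; exact hG.nonneg _ _ _
          have hd0' := hd0 n
          -- comp1 bound
          have hb1 : G (s n) (s (n + 1)) u ≤ 2 * d n + e n := by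
            have h0 : G (s n) (s (n + 1)) u = G (s (n + 1)) (s n) u := hG.swap_left _ _ _
            have hr := hG.rect (s (n + 1)) (s n) u (s n)
            have h2 := half2 n
            have h3 := hperm_e n
            rw [h0]
            linarith
          have hb3 : G (s n) u u ≤ 2 * e n := by
            have h2 := hG.half' (s n) u
            have h3 := hperm_e n
            linarith
          have hb6a : G (s n) (T u) (T u) ≤ 2 * e n + G u (T u) (T u) := by
            have hr := hG.rect (s n) (T u) (T u) u
            linarith
          have hb6b : G (s (n + 1)) u u ≤ 2 * e (n + 1) := by
            have h2 := hG.half' (s (n + 1)) u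
            have h3 : G (s (n + 1)) (s (n + 1)) u = e (n + 1) := by
              rw [he_def, hG.perm13 (s (n + 1)) (s (n + 1)) u]
            linarith
          rw [hM_def]
          simp only [Mfun, ← hs]
          refine max_le ?_ (max_le ?_ (max_le ?_ (max_le ?_ (max_le ?_ ?_))))
          · linarith
          · linarith
          · linarith
          · linarith
          · linarith
          · linarith
        -- limits
        have hAlim : Tendsto A atTop (𝓝 (G u (T u) (T u))) := by
          refine tendsto_of_tendsto_of_tendsto_of_le_of_le
            (g := fun n => G u (T u) (T u) - e (n + 1))
            (h := fun n => 2 * e (n + 1) + G u (T u) (T u)) ?_ ?_ hA_lb hA_ub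
          · simpa using he_lim1.const_sub (G u (T u) (T u))
          · simpa using (he_lim1.const_mul 2).add_const (G u (T u) (T u))
        have hMlim : Tendsto Mk atTop (𝓝 (G u (T u) (T u))) := by
          refine tendsto_of_tendsto_of_tendsto_of_le_of_le
            (g := fun _ => G u (T u) (T u))
            (h := fun n => G u (T u) (T u) + 2 * d n + 2 * e n + 2 * e (n + 1))
            tendsto_const_nhds ?_ hM_lb hM_ub
          have : Tendsto (fun n => G u (T u) (T u) + 2 * d n + 2 * e n + 2 * e (n + 1))
              atTop (𝓝 (G u (T u) (T u) + 2 * 0 + 2 * 0 + 2 * 0)) :=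
            (((hd_lim.const_mul 2).const_add (G u (T u) (T u))).add
              (he_lim.const_mul 2)).add (he_lim1.const_mul 2)
          simpa using this
        exact keyContra hψ hφ
          (fun n => by rw [hA_def]; exact hG.nonneg _ _ _)
          (fun n => by rw [hM_def]; exact Mfun_nonneg hG _ _ _ _)
          hcpos hAlim hMlim hineq
  -- uniqueness
  have huniq : ∀ p : X, T p = p → ∀ z w : X, p ≤ z →
      GConvergesTo G (fun m => T^[m] z) w → p = w := by
    intro p hp z w hpz hw
    obtain ⟨t, ht0, ht⟩ : ∃ t : ℕ → X, t 0 = z ∧ ∀ m, t (m + 1) = T (t m) :=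
      ⟨fun m => T^[m] z, rfl, fun m => Function.iterate_succ_apply' T m z⟩
    have hw' : Tendsto (fun m => G w (t m) (t m)) atTop (𝓝 0) := by
      have heq : (fun m => T^[m] z) = t := by
        funext m
        induction m with
        | zero => exact ht0.symm
        | succ m ih => rw [Function.iterate_succ_apply' T m z, ih, ht]
      rw [← heq]
      exact hw
    obtain ⟨f, hf_def⟩ : ∃ f : ℕ → ℝ, ∀ m, f m = G w (t m) (t m) := ⟨_, fun _ => rfl⟩
    have hf_lim : Tendsto f atTop (𝓝 0) := by
      have : (fun m => G w (t m) (t m)) = f := funext fun m => (hf_def m).symm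
      rwa [this] at hw'
    have hf_lim1 : Tendsto (fun m => f (m + 1)) atTop (𝓝 0) :=
      hf_lim.comp (tendsto_add_atTop_nat 1)
    have hf0 : ∀ m, 0 ≤ f m := fun m => by rw [hf_def]; exact hG.nonneg _ _ _
    have hple : ∀ m, p ≤ t m := by
      intro m
      induction m with
      | zero => rw [ht0]; exact hpz
      | succ m ih =>
        rw [ht m]
        calc p = T p := hp.symm
        _ ≤ T (t m) := hTmono ih
    by_contra hne
    have hγpos : 0 < G p p w := hG.pos_of_ne p w hne
    obtain ⟨A, hA_def⟩ : ∃ A : ℕ → ℝ, ∀ m, A m = G p p (t m) := ⟨_, fun _ => rfl⟩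
    obtain ⟨Mk, hM_def⟩ : ∃ Mk : ℕ → ℝ, ∀ m, Mk m = Mfun G T p p (t m) := ⟨_, fun _ => rfl⟩
    have hineq : ∀ m, ψ (A (m + 1)) ≤ ψ (Mk m) - φ (Mk m) := by
      intro m
      have h := hcontr p p (t m) le_rfl (hple m)
      rw [hp, ← ht m] at h
      rw [hA_def, hM_def]
      exact h
    -- perm facts
    have hpA : ∀ m, G (t m) p p = A m := by
      intro m
      rw [hA_def, hG.perm13 (t m) p p]
    have hpw : G w p p = G p p w := hG.perm13 w p p
    have htw : ∀ m, G (t m) w w ≤ 2 * f m := by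
      intro m
      have h := hG.half' (t m) w
      rw [hG.perm13 (t m) (t m) w, ← hf_def m] at h
      exact h
    -- bounds on A
    have hA_lb : ∀ m, G p p w - f m ≤ A m := by
      intro m
      have hr := hG.rect w p p (t m)
      rw [hpw] at hr
      rw [hpA m, ← hf_def m] at hr
      linarith [hr]
    have hA_ub : ∀ m, A m ≤ 2 * f m + G p p w := by
      intro m
      have hr := hG.rect (t m) p p w
      rw [hpw] at hr
      have h2 := htw m
      rw [← hpA m]
      linarith
    -- bound on D
    have hD : ∀ m, G (t m) (t (m + 1)) (t (m + 1)) ≤ 2 * f m + f (m + 1) := by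
      intro m
      have hr := hG.rect (t m) (t (m + 1)) (t (m + 1)) w
      have h2 := htw m
      have h3 := hf_def (m + 1)
      linarith
    -- bounds on Mk
    have hM_lb : ∀ m, A m ≤ Mk m := by
      intro m
      rw [hM_def, hA_def]
      simp only [Mfun, hp, ← ht]
      exact le_trans (le_max_left _ _)
        (le_trans (le_max_right _ _) (le_max_right _ _))
    have hM_ub : ∀ m, Mk m ≤ G p p w + 2 * f m + 2 * f (m + 1) := by
      intro m
      have h2 := hA_ub m
      have h21 := hA_ub (m + 1)
      have h5 := hD m
      have hγ0 : 0 ≤ G p p w := hG.nonneg _ _ _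
      have hf0m := hf0 m
      have hf0m1 := hf0 (m + 1)
      rw [hM_def]
      simp only [Mfun, hp, ← ht]
      have hz : G p p p = 0 := hG.eq_zero_of_eq p
      refine max_le ?_ (max_le ?_ (max_le ?_ (max_le ?_ (max_le ?_ ?_))))
      · rw [hz]; linarith
      · rw [← hA_def]; linarith
      · rw [← hA_def]; linarith
      · rw [hz]; linarith
      · linarith
      · rw [← hA_def (m + 1), ← hA_def m]; linarith
    -- limits
    have hAlim1 : Tendsto (fun m => A (m + 1)) atTop (𝓝 (G p p w)) := by
      refine tendsto_of_tendsto_of_tendsto_of_le_of_le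
        (g := fun m => G p p w - f (m + 1))
        (h := fun m => 2 * f (m + 1) + G p p w) ?_ ?_
        (fun m => hA_lb (m + 1)) (fun m => hA_ub (m + 1))
      · simpa using hf_lim1.const_sub (G p p w)
      · simpa using (hf_lim1.const_mul 2).add_const (G p p w)
    have hMlim : Tendsto Mk atTop (𝓝 (G p p w)) := by
      refine tendsto_of_tendsto_of_tendsto_of_le_of_le
        (g := fun m => G p p w - f m)
        (h := fun m => G p p w + 2 * f m + 2 * f (m + 1)) ?_ ?_
        (fun m => le_trans (hA_lb m) (hM_lb m)) hM_ub
      · simpa using hf_lim.const_sub (G p p w)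
      · have : Tendsto (fun m => G p p w + 2 * f m + 2 * f (m + 1)) atTop
            (𝓝 (G p p w + 2 * 0 + 2 * 0)) :=
          ((hf_lim.const_mul 2).const_add (G p p w)).add (hf_lim1.const_mul 2)
        simpa using this
    exact keyContra hψ hφ
      (fun m => by rw [hA_def]; exact hG.nonneg _ _ _)
      (fun m => by rw [hM_def]; exact Mfun_nonneg hG _ _ _ _)
      hγpos hAlim1 hMlim hineq
  obtain ⟨u, hu_fix⟩ := hfix
  refine ⟨u, hu_fix, fun v hv => ?_⟩
  obtain ⟨z, hvz, huz, w, hw⟩ := hdom v u hv hu_fix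
  exact (huniq v hv z w hvz hw).trans (huniq u hu_fix z w huz hw).symm
end

section
/- Let (X,⪯,G) be a partially ordered G-metric space and let T : X → X be non-decreasing with respect to ⪯ with x₀ ⪯ T x₀ for some x₀ ∈ X. Suppose there exist ψ ∈ Ψ and φ ∈ Φ such that for all x, y, z ∈ X with x ⪯ y ⪯ z, ψ(G(Tx,Ty,Tz)) ≤ ψ(M(x,y,z)) − φ(M(x,y,z)). Define the Picard sequence x_{n+1} = T x_n for n ≥ 0. Then for all n ≥ 1, G(x_n, x_{n+1}, x_{n+1}) ≤ G(x_{n−1}, x_n, x_n). -/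
open Filter Topology Set

theorem stmt14 {X : Type*} [Nonempty X] [PartialOrder X] (G : X → X → X → ℝ)
    (hG : IsGMetric G) (T : X → X) (hTmono : Monotone T)
    (x₀ : X) (hx₀ : x₀ ≤ T x₀)
    (ψ φ : ℝ → ℝ) (hψ : MemPsi ψ) (hφ : MemPhi φ)
    (hcontr : ∀ x y z : X, x ≤ y → y ≤ z →
      ψ (G (T x) (T y) (T z)) ≤ ψ (Mfun G T x y z) - φ (Mfun G T x y z))
    (x : ℕ → X) (hx0 : x 0 = x₀) (hrec : ∀ n, x (n + 1) = T (x n)) :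
    ∀ n : ℕ, 1 ≤ n →
      G (x n) (x (n + 1)) (x (n + 1)) ≤ G (x (n - 1)) (x n) (x n) := by
  intro n hn
  obtain ⟨m, rfl⟩ : ∃ m, n = m + 1 := ⟨n - 1, (Nat.succ_pred_eq_of_pos hn).symm⟩
  simp only [Nat.add_sub_cancel]
  have hchain : ∀ k, x k ≤ x (k + 1) := by
    intro k
    induction k with
    | zero => simpa [hrec, hx0] using hx₀
    | succ k ih => rw [hrec, hrec]; exact hTmono ih
  have hT : ∀ k, T (x k) = x (k + 1) := fun k => (hrec k).symm
  set gp := G (x m) (x (m + 1)) (x (m + 1)) with hgp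
  set g := G (x (m + 1)) (x (m + 2)) (x (m + 2)) with hgdef
  by_contra hlt
  push_neg at hlt
  have hzero : G (x (m + 1)) (x (m + 1)) (x (m + 1)) = 0 := hG.eq_zero_of_eq _
  have hrect : G (x m) (x (m + 2)) (x (m + 2)) ≤ gp + g :=
    hG.rect (x m) (x (m + 2)) (x (m + 2)) (x (m + 1))
  have hMeq : Mfun G T (x m) (x (m + 1)) (x (m + 1)) = g := by
    simp only [Mfun, hT, hzero]
    refine le_antisymm ?_ ?_
    · refine max_le (by linarith) (max_le (by linarith) (max_le (by linarith)
        (max_le le_rfl (max_le le_rfl (by linarith)))))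
    · exact le_max_of_le_right (le_max_of_le_right (le_max_of_le_right (le_max_left _ _)))
  have hcon := hcontr (x m) (x (m + 1)) (x (m + 1)) (hchain m) le_rfl
  simp only [hT, hMeq] at hcon
  have hg0 : 0 ≤ g := hG.nonneg _ _ _
  have hgp0 : 0 ≤ gp := hG.nonneg _ _ _
  have hφ0 : 0 ≤ φ g := hφ.2.1 g hg0
  have hφg : φ g = 0 := by linarith
  have : g = 0 := (hφ.2.2 g hg0).1 hφg
  linarith
end

section
/- Let (X,⪯,G) be a partially ordered G-metric space and let T : X → X be non-decreasing with respect to ⪯ with x₀ ⪯ T x₀ for some x₀ ∈ X. Suppose there exist ψ ∈ Ψ and φ ∈ Φ such that for all x, y, z ∈ X with x ⪯ y ⪯ z, ψ(G(Tx,Ty,Tz)) ≤ ψ(M(x,y,z)) − φ(M(x,y,z)). Define the Picard sequence x_{n+1} = T x_n for n ≥ 0. Then lim_{n→∞} G(x_{n−1}, x_n, x_n) = 0 and lim_{n→∞} G(x_{n−1}, x_{n−1}, x_n) = 0. -/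
open Filter Topology Set

theorem stmt15 {X : Type*} [Nonempty X] [PartialOrder X] (G : X → X → X → ℝ)
    (hG : IsGMetric G) (T : X → X) (hTmono : Monotone T)
    (x₀ : X) (hx₀ : x₀ ≤ T x₀)
    (ψ φ : ℝ → ℝ) (hψ : MemPsi ψ) (hφ : MemPhi φ)
    (hcontr : ∀ x y z : X, x ≤ y → y ≤ z →
      ψ (G (T x) (T y) (T z)) ≤ ψ (Mfun G T x y z) - φ (Mfun G T x y z))
    (x : ℕ → X) (hx0 : x 0 = x₀) (hrec : ∀ n, x (n + 1) = T (x n)) :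
    Tendsto (fun n => G (x n) (x (n + 1)) (x (n + 1))) atTop (𝓝 0) ∧
      Tendsto (fun n => G (x n) (x n) (x (n + 1))) atTop (𝓝 0) := by
  set g : ℕ → ℝ := fun n => G (x n) (x (n + 1)) (x (n + 1)) with hgdef
  have hmono : ∀ n, x n ≤ x (n + 1) := by
    intro n
    induction n with
    | zero => rw [hrec 0, hx0]; exact hx₀
    | succ n ih => simpa only [hrec] using hTmono ih
  have hgnn : ∀ n, 0 ≤ g n := fun n => hG.nonneg _ _ _
  -- bounds on Mfun
  have hMge1 : ∀ n, g n ≤ Mfun G T (x n) (x (n+1)) (x (n+1)) := by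
    intro n
    unfold Mfun
    rw [← hrec n]
    exact le_max_left _ _
  have hMge2 : ∀ n, g (n+1) ≤ Mfun G T (x n) (x (n+1)) (x (n+1)) := by
    intro n
    unfold Mfun
    rw [← hrec (n+1)]
    exact le_max_of_le_right (le_max_of_le_right (le_max_of_le_right (le_max_left _ _)))
  have hMle : ∀ n, Mfun G T (x n) (x (n+1)) (x (n+1)) ≤ max (g n) (g (n+1)) := by
    intro n
    unfold Mfun
    rw [← hrec n, ← hrec (n+1)]
    have h0 : G (x (n+1)) (x (n+1)) (x (n+1)) = 0 := hG.eq_zero_of_eq _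
    have hacc : G (x n) (x (n+2)) (x (n+2)) ≤ g n + g (n+1) := hG.rect _ _ _ (x (n+1))
    have h1 : g n ≤ max (g n) (g (n+1)) := le_max_left _ _
    have h2 : g (n+1) ≤ max (g n) (g (n+1)) := le_max_right _ _
    simp only [max_le_iff]
    refine ⟨h1, h1, h1, h2, h2, ?_⟩
    rw [h0]
    have : (g n + g (n+1)) / 2 ≤ max (g n) (g (n+1)) := by
      rcases le_total (g n) (g (n+1)) with h | h
      · rw [max_eq_right h]; linarith
      · rw [max_eq_left h]; linarith
    linarith
  have key : ∀ n, ψ (g (n+1)) ≤ ψ (Mfun G T (x n) (x (n+1)) (x (n+1)))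
      - φ (Mfun G T (x n) (x (n+1)) (x (n+1))) := by
    intro n
    have h := hcontr (x n) (x (n+1)) (x (n+1)) (hmono n) le_rfl
    rwa [← hrec n, ← hrec (n+1)] at h
  have hφpos : ∀ t : ℝ, 0 < t → 0 < φ t := by
    intro t ht
    rcases lt_or_eq_of_le (hφ.2.1 t ht.le) with h | h
    · exact h
    · exact absurd (((hφ.2.2 t ht.le).mp h.symm)) ht.ne'
  have hanti : ∀ n, g (n+1) ≤ g n := by
    intro n
    by_contra h
    push_neg at h
    have hpos : 0 < g (n+1) := lt_of_le_of_lt (hgnn n) h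
    have hM : Mfun G T (x n) (x (n+1)) (x (n+1)) = g (n+1) :=
      le_antisymm ((hMle n).trans_eq (max_eq_right h.le)) (hMge2 n)
    have hk := key n
    rw [hM] at hk
    have := hφpos _ hpos
    linarith
  have key' : ∀ n, ψ (g (n+1)) ≤ ψ (g n) - φ (g n) := by
    intro n
    have hM : Mfun G T (x n) (x (n+1)) (x (n+1)) = g n :=
      le_antisymm ((hMle n).trans_eq (max_eq_left (hanti n))) (hMge1 n)
    have hk := key n
    rwa [hM] at hk
  have hgAnti : Antitone g := antitone_nat_of_succ_le hanti
  have hbdd : BddBelow (Set.range g) := ⟨0, by rintro y ⟨n, rfl⟩; exact hgnn n⟩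
  have hgr : Tendsto g atTop (𝓝 (⨅ n, g n)) := tendsto_atTop_ciInf hgAnti hbdd
  set r : ℝ := ⨅ n, g n with hrdef
  have hr0 : 0 ≤ r := le_ciInf fun n => hgnn n
  have hreq : r = 0 := by
    by_contra hrne
    have hrpos : 0 < r := lt_of_le_of_ne hr0 (Ne.symm hrne)
    have hφr : 0 < φ r := hφpos r hrpos
    have htend : Tendsto g atTop (𝓝[Ici 0] r) :=
      tendsto_nhdsWithin_of_tendsto_nhds_of_eventually_within _ hgr
        (Filter.Eventually.of_forall fun n => hgnn n)
    have hlsc := hφ.1 r hr0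
    have hev : ∀ᶠ n in atTop, φ r / 2 < φ (g n) :=
      htend.eventually (hlsc (φ r / 2) (half_lt_self hφr))
    have hψr : Tendsto (fun n => ψ (g n)) atTop (𝓝 (ψ r)) :=
      ((hψ.1 r hr0).tendsto).comp htend
    have hψr' : Tendsto (fun n => ψ (g (n+1))) atTop (𝓝 (ψ r)) :=
      hψr.comp (tendsto_add_atTop_nat 1)
    have hdiff : Tendsto (fun n => ψ (g n) - ψ (g (n+1))) atTop (𝓝 0) := by
      have := hψr.sub hψr'
      simpa using this
    have hev2 : ∀ᶠ n in atTop, ψ (g n) - ψ (g (n+1)) < φ r / 2 :=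
      hdiff.eventually (tendsto_id.eventually_lt_const (half_pos hφr)) |>.mono
        (fun n h => h)
    obtain ⟨n, h1, h2⟩ := (hev.and hev2).exists
    have := key' n
    linarith
  have hg0 : Tendsto g atTop (𝓝 0) := hreq ▸ hgr
  refine ⟨hg0, ?_⟩
  have hle : ∀ n, G (x n) (x n) (x (n+1)) ≤ 2 * g n := by
    intro n
    have h := hG.rect (x n) (x n) (x (n+1)) (x (n+1))
    have h2 : G (x (n+1)) (x n) (x (n+1)) = g n := by
      rw [hG.swap_left]
    linarith [h, h2.le]
  have h2g : Tendsto (fun n => 2 * g n) atTop (𝓝 0) := by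
    have := hg0.const_mul 2
    simpa using this
  exact squeeze_zero (fun n => hG.nonneg _ _ _) hle h2g
end

section
/- Let (X,⪯,G) be a partially ordered G-metric space and let T : X → X be non-decreasing with respect to ⪯ with x₀ ⪯ T x₀ for some x₀ ∈ X. Suppose there exist ψ ∈ Ψ and φ ∈ Φ such that for all x, y, z ∈ X with x ⪯ y ⪯ z, ψ(G(Tx,Ty,Tz)) ≤ ψ(M(x,y,z)) − φ(M(x,y,z)). Then the Picard sequence defined by x_{n+1} = T x_n for n ≥ 0 is G-Cauchy. -/
open Filter Topology Set

private lemma IsGMetric.cyc {X : Type*} {G : X → X → X → ℝ} (hG : IsGMetric G) (a b c : X) :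
    G a b c = G b c a := by rw [hG.swap_left, hG.swap_right]

private lemma IsGMetric.two {X : Type*} {G : X → X → X → ℝ} (hG : IsGMetric G) (a b : X) :
    G a a b ≤ 2 * G a b b := by
  have h := hG.rect a a b b
  have h2 : G b a b = G a b b := hG.swap_left b a b
  linarith

theorem stmt16 {X : Type*} [Nonempty X] [PartialOrder X] (G : X → X → X → ℝ)
    (hG : IsGMetric G) (T : X → X) (hTmono : Monotone T)
    (x₀ : X) (hx₀ : x₀ ≤ T x₀)
    (ψ φ : ℝ → ℝ) (hψ : MemPsi ψ) (hφ : MemPhi φ)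
    (hcontr : ∀ x y z : X, x ≤ y → y ≤ z →
      ψ (G (T x) (T y) (T z)) ≤ ψ (Mfun G T x y z) - φ (Mfun G T x y z))
    (x : ℕ → X) (hx0 : x 0 = x₀) (hrec : ∀ n, x (n + 1) = T (x n)) :
    GCauchy G x := by
  classical
  obtain ⟨hψc, hψm, hψ0, hψiff⟩ := hψ
  obtain ⟨hφc, hφ0, hφiff⟩ := hφ
  have hφpos : ∀ t : ℝ, 0 < t → 0 < φ t := fun t ht =>
    lt_of_le_of_ne (hφ0 t ht.le) fun h => ht.ne' ((hφiff t ht.le).mp h.symm)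
  have hchain : ∀ n, x n ≤ x (n + 1) := by
    intro n
    induction n with
    | zero => rw [hrec 0, hx0]; exact hx₀
    | succ k ih =>
      have h := hTmono ih
      rw [← hrec k] at h
      rw [hrec (k + 1)]
      exact h
  have hxmono : Monotone x := monotone_nat_of_le_succ hchain
  set g : ℕ → ℝ := fun n => G (x n) (x (n + 1)) (x (n + 1)) with hgdef
  have hgnn : ∀ n, 0 ≤ g n := fun n => hG.nonneg _ _ _
  -- key inequality along the Picard sequence
  have hkey : ∀ n, g (n + 1) ≤ g n ∧ ψ (g (n + 1)) ≤ ψ (g n) - φ (g n) := by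
    intro n
    have e1 : G (x n) (x (n + 1)) (x (n + 1)) = g n := rfl
    have e2 : G (x (n + 1)) (x (n + 1 + 1)) (x (n + 1 + 1)) = g (n + 1) := rfl
    have h0 : G (x (n + 1)) (x (n + 1)) (x (n + 1)) = 0 := hG.eq_zero_of_eq _
    have he : G (x n) (x (n + 1 + 1)) (x (n + 1 + 1)) ≤ g n + g (n + 1) := by
      have := hG.rect (x n) (x (n + 1 + 1)) (x (n + 1 + 1)) (x (n + 1))
      rw [e1, e2] at this; exact this
    have henn : 0 ≤ G (x n) (x (n + 1 + 1)) (x (n + 1 + 1)) := hG.nonneg _ _ _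
    have hM : Mfun G T (x n) (x (n + 1)) (x (n + 1)) = max (g n) (g (n + 1)) := by
      simp only [Mfun, ← hrec]
      rw [e1, e2, h0]
      apply le_antisymm
      · refine max_le (le_max_left _ _) (max_le (le_max_left _ _) (max_le (le_max_left _ _)
          (max_le (le_max_right _ _) (max_le (le_max_right _ _) ?_))))
        have h1 := le_max_left (g n) (g (n + 1))
        have h2 := le_max_right (g n) (g (n + 1))
        linarith
      · apply max_le
        · exact le_max_left _ _
        · exact le_max_of_le_right (le_max_of_le_right (le_max_of_le_right (le_max_left _ _)))
    have hc := hcontr (x n) (x (n + 1)) (x (n + 1)) (hchain n) le_rfl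
    rw [← hrec n, ← hrec (n + 1), hM, e2] at hc
    have hdec : g (n + 1) ≤ g n := by
      by_contra hlt
      push_neg at hlt
      rw [max_eq_right hlt.le] at hc
      have h2 : 0 < φ (g (n + 1)) := hφpos _ (lt_of_le_of_lt (hgnn n) hlt)
      linarith
    rw [max_eq_left hdec] at hc
    exact ⟨hdec, hc⟩
  have gdec : Antitone g := antitone_nat_of_succ_le fun n => (hkey n).1
  -- the basic distances tend to zero
  have gto0 : ∀ δ : ℝ, 0 < δ → ∃ N, ∀ j, N ≤ j → g j < δ := by
    intro δ hδ
    by_contra hcon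
    push_neg at hcon
    have hall : ∀ N, δ ≤ g N := by
      intro N
      obtain ⟨j, hj, hgj⟩ := hcon N
      exact hgj.trans (gdec hj)
    have hbdd : BddBelow (range g) := ⟨0, fun y hy => by obtain ⟨n, rfl⟩ := hy; exact hgnn n⟩
    have htend : Tendsto g atTop (𝓝 (⨅ n, g n)) := tendsto_atTop_ciInf gdec hbdd
    have hrδ : δ ≤ ⨅ n, g n := le_ciInf hall
    have hrpos : (0 : ℝ) < ⨅ n, g n := hδ.trans_le hrδ
    have htendw : Tendsto g atTop (𝓝[Ici 0] (⨅ n, g n)) :=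
      tendsto_nhdsWithin_of_tendsto_nhds_of_eventually_within _ htend
        (Eventually.of_forall fun n => hgnn n)
    have hφr := hφpos _ hrpos
    have hev : ∀ᶠ n in atTop, φ (⨅ n, g n) / 2 < φ (g n) :=
      htendw.eventually (hφc _ hrpos.le _ (half_lt_self hφr))
    have hψt : Tendsto (fun n => ψ (g n)) atTop (𝓝 (ψ (⨅ n, g n))) :=
      (hψc _ hrpos.le).tendsto.comp htendw
    have hψt1 : Tendsto (fun n => ψ (g (n + 1))) atTop (𝓝 (ψ (⨅ n, g n))) :=
      hψt.comp (tendsto_add_atTop_nat 1)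
    have hdiff : Tendsto (fun n => ψ (g n) - ψ (g (n + 1))) atTop (𝓝 0) := by
      have := hψt.sub hψt1
      simpa using this
    have hev2 : ∀ᶠ n in atTop, φ (⨅ n, g n) / 2 ≤ ψ (g n) - ψ (g (n + 1)) := by
      filter_upwards [hev] with n hn
      have := (hkey n).2
      linarith
    have := ge_of_tendsto hdiff hev2
    linarith
  rcases em (∃ p, x p = x (p + 1)) with ⟨p, hp⟩ | hnd
  · -- eventually constant sequence
    have hconst0 : ∀ k, x (p + k) = x p := by
      intro k
      induction k with
      | zero => rfl
      | succ i ih =>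
        calc x (p + (i + 1)) = T (x (p + i)) := hrec _
        _ = T (x p) := by rw [ih]
        _ = x (p + 1) := (hrec p).symm
        _ = x p := hp.symm
    have hconst : ∀ j, p ≤ j → x j = x p := by
      intro j hj
      have := hconst0 (j - p)
      rwa [Nat.add_sub_cancel' hj] at this
    intro ε hε
    refine ⟨p, fun n hn m hm l hl => ?_⟩
    rw [hconst n hn, hconst m hm, hconst l hl, hG.eq_zero_of_eq]
    exact hε
  push_neg at hnd
  -- main case : no two consecutive points coincide
  suffices hclaim : ∀ ε : ℝ, 0 < ε → ∃ N, ∀ n m, N ≤ n → n ≤ m → G (x n) (x m) (x m) < ε by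
    intro ε hε
    obtain ⟨N, hN⟩ := hclaim (ε / 6) (by positivity)
    refine ⟨N, fun n hn m hm l hl => ?_⟩
    have key : ∀ a b, N ≤ a → N ≤ b → G (x a) (x b) (x b) < ε / 3 := by
      intro a b ha hb
      rcases le_total a b with h | h
      · have := hN a b ha h
        linarith
      · have h1 : G (x a) (x b) (x b) = G (x b) (x b) (x a) := by
          rw [hG.swap_left, hG.swap_right]
        rw [h1]
        have h2 := hG.two (x b) (x a)
        have h3 := hN b a hb h
        linarith
    have hr := hG.rect (x n) (x m) (x l) (x m)
    have hs : G (x m) (x m) (x l) = G (x l) (x m) (x m) := by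
      rw [hG.swap_right, hG.swap_left]
    have k1 := key n m hn hm
    have k2 := key l m hl hm
    rw [hs] at hr
    linarith
  intro ε hε
  by_contra hcon
  push_neg at hcon
  -- selection of almost-minimal bad pairs
  have hseq : ∀ k : ℕ, ∃ n m : ℕ, n ≤ m ∧ (∀ j, n ≤ j → g j < 1 / ((k : ℝ) + 1)) ∧
      ε ≤ G (x n) (x m) (x m) ∧ G (x n) (x m) (x m) < ε + 1 / ((k : ℝ) + 1) := by
    intro k
    have hδ : (0 : ℝ) < 1 / ((k : ℝ) + 1) := by positivity
    obtain ⟨N, hN⟩ := gto0 (1 / ((k : ℝ) + 1)) hδ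
    obtain ⟨n, m, hn, hnm, hd⟩ := hcon N
    have hex : ∃ mm, n ≤ mm ∧ ε ≤ G (x n) (x mm) (x mm) := ⟨m, hnm, hd⟩
    obtain ⟨hm0le, hm0d⟩ := Nat.find_spec hex
    have hm0ne : n ≠ Nat.find hex := by
      intro h
      rw [← h] at hm0d
      have h0 : G (x n) (x n) (x n) = 0 := hG.eq_zero_of_eq _
      linarith
    have hm0gt : n + 1 ≤ Nat.find hex := by omega
    have hm'lt : Nat.find hex - 1 < Nat.find hex := by omega
    have hm'ge : n ≤ Nat.find hex - 1 := by omega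
    have hm'succ : Nat.find hex - 1 + 1 = Nat.find hex := by omega
    have hminm' := Nat.find_min hex hm'lt
    have hlt : G (x n) (x (Nat.find hex - 1)) (x (Nat.find hex - 1)) < ε := by
      by_contra hge
      push_neg at hge
      exact hminm' ⟨hm'ge, hge⟩
    refine ⟨n, Nat.find hex, hm0le, fun j hj => hN j (hn.trans hj), hm0d, ?_⟩
    have hrect := hG.rect (x (Nat.find hex)) (x (Nat.find hex)) (x (Nat.find hex))
      (x (Nat.find hex - 1))
    have hrect2 : G (x n) (x (Nat.find hex)) (x (Nat.find hex)) ≤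
        G (x n) (x (Nat.find hex - 1)) (x (Nat.find hex - 1)) +
        G (x (Nat.find hex - 1)) (x (Nat.find hex)) (x (Nat.find hex)) :=
      hG.rect _ _ _ _
    have hgm' : G (x (Nat.find hex - 1)) (x (Nat.find hex)) (x (Nat.find hex)) <
        1 / ((k : ℝ) + 1) := by
      have := hN (Nat.find hex - 1) (hn.trans hm'ge)
      rw [hgdef] at this
      simp only at this
      rwa [hm'succ] at this
    linarith
  choose nn mm hnm hgk hd1 hd2 using hseq
  -- bounds on M and on the image distance
  have hMb : ∀ k, ε ≤ Mfun G T (x (nn k)) (x (mm k)) (x (mm k)) ∧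
      Mfun G T (x (nn k)) (x (mm k)) (x (mm k)) ≤ ε + 6 * (1 / ((k : ℝ) + 1)) ∧
      ε - 3 * (1 / ((k : ℝ) + 1)) ≤ G (x (nn k + 1)) (x (mm k + 1)) (x (mm k + 1)) := by
    intro k
    have hδp : (0 : ℝ) < 1 / ((k : ℝ) + 1) := by positivity
    have hgn : g (nn k) < 1 / ((k : ℝ) + 1) := hgk k (nn k) le_rfl
    have hgm : g (mm k) < 1 / ((k : ℝ) + 1) := hgk k (mm k) (hnm k)
    have egn : G (x (nn k)) (x (nn k + 1)) (x (nn k + 1)) = g (nn k) := rfl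
    have egm : G (x (mm k)) (x (mm k + 1)) (x (mm k + 1)) = g (mm k) := rfl
    have hdnn : 0 ≤ G (x (nn k)) (x (mm k)) (x (mm k)) := hG.nonneg _ _ _
    -- B1 : G a' b b ≤ 2 g n + d
    have s1 := hG.rect (x (nn k + 1)) (x (mm k)) (x (mm k)) (x (nn k))
    have s2 : G (x (nn k + 1)) (x (nn k)) (x (nn k)) = G (x (nn k)) (x (nn k)) (x (nn k + 1)) := by
      rw [hG.swap_left, hG.swap_right]
    have s3 := hG.two (x (nn k)) (x (nn k + 1))
    rw [egn] at s3
    rw [s2] at s1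
    have hB1 : G (x (nn k + 1)) (x (mm k)) (x (mm k)) ≤
        2 * g (nn k) + G (x (nn k)) (x (mm k)) (x (mm k)) := by linarith
    -- B2 : G a b' b' ≤ d + g m
    have hB2 := hG.rect (x (nn k)) (x (mm k + 1)) (x (mm k + 1)) (x (mm k))
    rw [egm] at hB2
    -- E1 : G a a' b ≤ 3 g n + 2 g m + d
    have t1 := hG.rect (x (nn k)) (x (nn k + 1)) (x (mm k)) (x (nn k + 1))
    rw [egn] at t1
    have t2 := hG.le_of_ne (x (nn k + 1)) (x (mm k)) (x (mm k + 1)) (hnd (mm k))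
    have t3 : G (x (nn k + 1)) (x (mm k)) (x (mm k + 1)) =
        G (x (mm k + 1)) (x (nn k + 1)) (x (mm k)) := by
      rw [hG.cyc, hG.cyc]
    have t4 := hG.rect (x (mm k + 1)) (x (nn k + 1)) (x (mm k)) (x (mm k))
    have t5 : G (x (mm k + 1)) (x (mm k)) (x (mm k)) =
        G (x (mm k)) (x (mm k)) (x (mm k + 1)) := hG.cyc _ _ _
    have t6 := hG.two (x (mm k)) (x (mm k + 1))
    rw [egm] at t6
    have t7 : G (x (mm k)) (x (nn k + 1)) (x (mm k)) =
        G (x (nn k + 1)) (x (mm k)) (x (mm k)) := hG.swap_left _ _ _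
    have hE1 : G (x (nn k)) (x (nn k + 1)) (x (mm k)) ≤
        3 * g (nn k) + 2 * g (mm k) + G (x (nn k)) (x (mm k)) (x (mm k)) := by
      rw [t3] at t2
      rw [t5, t7] at t4
      linarith
    -- lower bound for L
    have u1 := hG.rect (x (nn k)) (x (mm k)) (x (mm k)) (x (nn k + 1))
    rw [egn] at u1
    have u2 := hG.rect (x (nn k + 1)) (x (mm k)) (x (mm k)) (x (mm k + 1))
    rw [t5] at u2
    have hMeq : Mfun G T (x (nn k)) (x (mm k)) (x (mm k)) =
        max (G (x (nn k)) (x (nn k + 1)) (x (mm k)))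
          (max (G (x (nn k)) (x (nn k + 1)) (x (mm k)))
            (max (G (x (nn k)) (x (mm k)) (x (mm k)))
              (max (G (x (mm k)) (x (mm k + 1)) (x (mm k + 1)))
                (max (G (x (mm k)) (x (mm k + 1)) (x (mm k + 1)))
                  ((G (x (nn k)) (x (mm k + 1)) (x (mm k + 1)) +
                    G (x (nn k + 1)) (x (mm k)) (x (mm k))) / 2))))) := by
      simp only [Mfun, ← hrec]
    have hd1' := hd1 k
    have hd2' := hd2 k
    refine ⟨?_, ?_, ?_⟩
    · rw [hMeq]
      exact hd1'.trans (le_max_of_le_right (le_max_of_le_right (le_max_left _ _)))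
    · rw [hMeq, egm]
      refine max_le ?_ (max_le ?_ (max_le ?_ (max_le ?_ (max_le ?_ ?_)))) <;> linarith
    · linarith
  -- pass to the limit
  set D : ℕ → ℝ := fun k => 1 / ((k : ℝ) + 1) with hDdef
  have hDto : Tendsto D atTop (𝓝 0) := tendsto_one_div_add_atTop_nhds_zero_nat
  have hDpos : ∀ k, 0 < D k := fun k => by positivity
  set Mk : ℕ → ℝ := fun k => Mfun G T (x (nn k)) (x (mm k)) (x (mm k)) with hMkdef
  have hMk1 : ∀ k, ε ≤ Mk k := fun k => (hMb k).1
  have hMk2 : ∀ k, Mk k ≤ ε + 6 * D k := fun k => (hMb k).2.1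
  have hLk : ∀ k, ε - 3 * D k ≤ G (x (nn k + 1)) (x (mm k + 1)) (x (mm k + 1)) :=
    fun k => (hMb k).2.2
  have hup : Tendsto (fun k => ε + 6 * D k) atTop (𝓝 ε) := by
    have : Tendsto (fun k => ε + 6 * D k) atTop (𝓝 (ε + 6 * 0)) :=
      tendsto_const_nhds.add (hDto.const_mul 6)
    simpa using this
  have hMt : Tendsto Mk atTop (𝓝 ε) :=
    tendsto_of_tendsto_of_tendsto_of_le_of_le tendsto_const_nhds hup hMk1 hMk2
  have hMtw : Tendsto Mk atTop (𝓝[Ici 0] ε) :=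
    tendsto_nhdsWithin_of_tendsto_nhds_of_eventually_within _ hMt
      (Eventually.of_forall fun k => mem_Ici.mpr (hε.le.trans (hMk1 k)))
  have hφev : ∀ᶠ k in atTop, φ ε / 2 < φ (Mk k) :=
    hMtw.eventually (hφc ε hε.le (φ ε / 2) (half_lt_self (hφpos ε hε)))
  have hψMk : ∀ k, ψ (Mk k) ≤ ψ (ε + 6 * D k) := fun k =>
    hψm (mem_Ici.mpr (hε.le.trans (hMk1 k)))
      (mem_Ici.mpr (by linarith [hDpos k])) (hMk2 k)
  have hev3 : ∀ᶠ k in atTop, D k < ε / 3 := hDto.eventually (gt_mem_nhds (by positivity))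
  have hψLk : ∀ᶠ k in atTop,
      ψ (ε - 3 * D k) ≤ ψ (G (x (nn k + 1)) (x (mm k + 1)) (x (mm k + 1))) := by
    filter_upwards [hev3] with k hk
    exact hψm (mem_Ici.mpr (by linarith [hDpos k])) (mem_Ici.mpr (hG.nonneg _ _ _)) (hLk k)
  have hck : ∀ k, ψ (G (x (nn k + 1)) (x (mm k + 1)) (x (mm k + 1))) ≤ ψ (Mk k) - φ (Mk k) := by
    intro k
    have h := hcontr (x (nn k)) (x (mm k)) (x (mm k)) (hxmono (hnm k)) le_rfl
    simp only [← hrec] at h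
    exact h
  have hcomb : ∀ᶠ k in atTop, φ ε / 2 ≤ ψ (ε + 6 * D k) - ψ (ε - 3 * D k) := by
    filter_upwards [hφev, hψLk] with k h1 h2
    have h3 := hck k
    have h4 := hψMk k
    linarith
  have hplusw : Tendsto (fun k => ε + 6 * D k) atTop (𝓝[Ici 0] ε) :=
    tendsto_nhdsWithin_of_tendsto_nhds_of_eventually_within _ hup
      (Eventually.of_forall fun k => mem_Ici.mpr (by linarith [hDpos k]))
  have hdown : Tendsto (fun k => ε - 3 * D k) atTop (𝓝 ε) := by
    have : Tendsto (fun k => ε - 3 * D k) atTop (𝓝 (ε - 3 * 0)) :=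
      tendsto_const_nhds.sub (hDto.const_mul 3)
    simpa using this
  have hdownw : Tendsto (fun k => ε - 3 * D k) atTop (𝓝[Ici 0] ε) :=
    tendsto_nhdsWithin_of_tendsto_nhds_of_eventually_within _ hdown
      (hev3.mono fun k hk => mem_Ici.mpr (by linarith [hDpos k]))
  have t1 : Tendsto (fun k => ψ (ε + 6 * D k)) atTop (𝓝 (ψ ε)) :=
    (hψc ε hε.le).tendsto.comp hplusw
  have t2 : Tendsto (fun k => ψ (ε - 3 * D k)) atTop (𝓝 (ψ ε)) :=
    (hψc ε hε.le).tendsto.comp hdownw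
  have htu : Tendsto (fun k => ψ (ε + 6 * D k) - ψ (ε - 3 * D k)) atTop (𝓝 0) := by
    have := t1.sub t2
    simpa using this
  have hfin := ge_of_tendsto htu hcomb
  linarith [hφpos ε hε]
end
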